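/- arXiv:2508.10331 — 2 statements merged into one kernel-verified Lean document; each statement's English description precedes it below -/
import Mathlib

section
/- Let σ, σ0, τ0 > 0, z ≥ 0, and N a positive integer. Define R(β) = ∫_{-∞}^{∞} (1/(√(2π) σ0)) exp(−(τ − τ0)²/(2σ0²)) · Φ((Nτ + τ0 β)/(2√N σ) − z) · τ dτ for β ≥ 0. Then R attains its maximum over [0,∞) at β* = 4σ²/σ0² + 2√N z σ/τ0, and in particular R(β*) ≥ R(0), with strict inequality when z > 0 or τ0 ≠ 0. -/
open Real MeasureTheory

/-- Standard normal CDF. -/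
noncomputable def Phi (x : ℝ) : ℝ :=
  ∫ t in Set.Iic x, (Real.sqrt (2 * Real.pi))⁻¹ * Real.exp (-t ^ 2 / 2)

/-!
Write the argument of `Phi` as `a τ + γ`, with `a = √N / (2σ)` and `γ` increasing in `β`, so that
`R β = G γ` with `G γ = ∫ w τ Φ(a τ + γ) dτ` and `w` the prior density times `τ`. By Fubini,
`G γ₂ - G γ₁ = ∫_{γ₁}^{γ₂} g u du` with `g u = ∫ w τ φ(a τ + u) dτ`. Completing the square,
the prior density times `φ(a τ + u)` is a multiple of a Gaussian density in `τ` (the posterior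
given the signal `u`), so `g u` is a positive multiple of its mean `(τ₀/σ₀² - a u) / (1/σ₀² + a²)`.
Hence `G` increases up to `γ* = τ₀ / (a σ₀²)` and decreases afterwards, and `γ* = γ β*`.
-/

open ProbabilityTheory

lemma gaussianPDFReal_zero_one (t : ℝ) :
    gaussianPDFReal 0 1 t = (√(2 * π))⁻¹ * exp (-t ^ 2 / 2) := by
  simp [gaussianPDFReal]

lemma gaussianPDFReal_zero_one_le (t : ℝ) : gaussianPDFReal 0 1 t ≤ (√(2 * π))⁻¹ := by
  rw [gaussianPDFReal_zero_one]
  exact mul_le_of_le_one_right (by positivity) (exp_le_one_iff.2 (by nlinarith [sq_nonneg t]))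

lemma Phi_eq_setIntegral_gaussianPDFReal (x : ℝ) :
    Phi x = ∫ t in Set.Iic x, gaussianPDFReal 0 1 t := by
  simp only [Phi, gaussianPDFReal_zero_one]

lemma Phi_nonneg (x : ℝ) : 0 ≤ Phi x := by
  rw [Phi_eq_setIntegral_gaussianPDFReal]
  exact setIntegral_nonneg measurableSet_Iic fun t _ => gaussianPDFReal_nonneg 0 1 t

lemma Phi_le_one (x : ℝ) : Phi x ≤ 1 := by
  rw [Phi_eq_setIntegral_gaussianPDFReal, ← integral_gaussianPDFReal_eq_one 0 one_ne_zero]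
  exact setIntegral_le_integral (integrable_gaussianPDFReal 0 1)
    (.of_forall (gaussianPDFReal_nonneg 0 1))

lemma Phi_monotone : Monotone Phi := fun x y hxy => by
  simp only [Phi_eq_setIntegral_gaussianPDFReal]
  exact setIntegral_mono_set (integrable_gaussianPDFReal 0 1).integrableOn
    (.of_forall (gaussianPDFReal_nonneg 0 1)) (Set.Iic_subset_Iic.2 hxy).eventuallyLE

lemma Phi_add_sub_Phi_add (d x y : ℝ) :
    Phi (d + y) - Phi (d + x) = ∫ u in x..y, gaussianPDFReal 0 1 (d + u) := by
  rw [Phi_eq_setIntegral_gaussianPDFReal, Phi_eq_setIntegral_gaussianPDFReal,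
    intervalIntegral.integral_Iic_sub_Iic (integrable_gaussianPDFReal 0 1).integrableOn
      (integrable_gaussianPDFReal 0 1).integrableOn,
    intervalIntegral.integral_comp_add_left]

lemma integrable_mul_Phi_add {w : ℝ → ℝ} (hw : Integrable w) (a γ : ℝ) :
    Integrable fun τ => w τ * Phi (a * τ + γ) :=
  hw.mul_bdd (Phi_monotone.measurable.comp (by fun_prop)).aestronglyMeasurable
    (ae_of_all _ fun τ => by
      rw [norm_of_nonneg (Phi_nonneg _)]
      exact Phi_le_one _)

lemma integrable_mul_gaussianPDFReal_prod {w : ℝ → ℝ} (hw : Integrable w) (a : ℝ) {s : Set ℝ}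
    (hs : volume s ≠ ⊤) :
    Integrable (Function.uncurry fun τ u => w τ * gaussianPDFReal 0 1 (a * τ + u))
      (volume.prod (volume.restrict s)) := by
  have : IsFiniteMeasure (volume.restrict s) := ⟨by simpa using hs.lt_top⟩
  refine (hw.comp_fst _).mul_bdd (c := (√(2 * π))⁻¹) ?_ (ae_of_all _ fun p => ?_)
  · exact ((measurable_gaussianPDFReal 0 1).comp (by fun_prop)).aestronglyMeasurable
  · rw [norm_of_nonneg (gaussianPDFReal_nonneg 0 1 _)]
    exact gaussianPDFReal_zero_one_le _

lemma intervalIntegrable_integral_mul_gaussianPDFReal {w : ℝ → ℝ} (hw : Integrable w)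
    (a x y : ℝ) :
    IntervalIntegrable (fun u => ∫ τ, w τ * gaussianPDFReal 0 1 (a * τ + u)) volume x y :=
  intervalIntegrable_iff.2 <|
    (integrable_mul_gaussianPDFReal_prod hw a measure_Ioc_lt_top.ne).integral_prod_right

lemma integral_mul_Phi_add_sub {w : ℝ → ℝ} (hw : Integrable w) (a : ℝ) {x y : ℝ} (hxy : x ≤ y) :
    (∫ τ, w τ * Phi (a * τ + y)) - ∫ τ, w τ * Phi (a * τ + x)
      = ∫ u in x..y, ∫ τ, w τ * gaussianPDFReal 0 1 (a * τ + u) := by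
  rw [← integral_sub (integrable_mul_Phi_add hw a y) (integrable_mul_Phi_add hw a x),
    intervalIntegral.integral_of_le hxy,
    ← integral_integral_swap (integrable_mul_gaussianPDFReal_prod hw a measure_Ioc_lt_top.ne)]
  congr 1 with τ
  rw [← mul_sub, Phi_add_sub_Phi_add, intervalIntegral.integral_of_le hxy, integral_const_mul]

lemma le_of_sub_eq_intervalIntegral_of_sign {F g : ℝ → ℝ} {c : ℝ}
    (hF : ∀ x y, x ≤ y → F y - F x = ∫ u in x..y, g u)
    (hg : ∀ u, ∃ k > 0, g u = k * (c - u)) (x : ℝ) : F x ≤ F c := by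
  rcases le_total x c with hxc | hcx
  · have := intervalIntegral.integral_nonneg (μ := volume) hxc fun u hu => by
      obtain ⟨k, hk, hgu⟩ := hg u
      exact hgu ▸ mul_nonneg hk.le (sub_nonneg.2 hu.2)
    linarith [hF x c hxc]
  · have := intervalIntegral.integral_nonneg (μ := volume) hcx fun u hu => by
      obtain ⟨k, hk, hgu⟩ := hg u
      exact neg_nonneg.2 (hgu ▸ mul_nonpos_of_nonneg_of_nonpos hk.le (sub_nonpos.2 hu.1))
    rw [intervalIntegral.integral_neg] at this
    linarith [hF c x hcx]

lemma lt_of_sub_eq_intervalIntegral_of_sign {F g : ℝ → ℝ} {c x : ℝ}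
    (hF : ∀ x y, x ≤ y → F y - F x = ∫ u in x..y, g u)
    (hg : ∀ u, ∃ k > 0, g u = k * (c - u)) (hint : IntervalIntegrable g volume x c)
    (hx : x < c) : F x < F c := by
  have := intervalIntegral.intervalIntegral_pos_of_pos_on hint (fun u hu => by
    obtain ⟨k, hk, hgu⟩ := hg u
    exact hgu ▸ mul_pos hk (sub_pos.2 hu.2)) hx
  linarith [hF x c hx.le]

lemma integrable_exp_neg_mul_sq_sub_mul {b : ℝ} (hb : 0 < b) (m : ℝ) :
    Integrable fun x => exp (-b * (x - m) ^ 2) * x := by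
  refine (((integrable_mul_exp_neg_mul_sq hb).comp_sub_right m).add
    (((integrable_exp_neg_mul_sq hb).comp_sub_right m).const_mul m)).congr
    (ae_of_all _ fun x => ?_)
  simp only [Pi.add_apply]
  ring

lemma integral_exp_neg_mul_sq_sub_mul {b : ℝ} (hb : 0 < b) (m : ℝ) :
    ∫ x, exp (-b * (x - m) ^ 2) * x = m * ∫ x, exp (-b * (x - m) ^ 2) := by
  have hodd : ∫ x, exp (-b * x ^ 2) * x = 0 := by
    have := integral_neg_eq_self (fun x : ℝ => exp (-b * x ^ 2) * x) volume
    simp only [neg_sq, mul_neg, integral_neg] at this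
    linarith
  rw [← integral_add_right_eq_self _ m, integral_sub_right_eq_self (fun x => exp (-b * x ^ 2))]
  simp only [add_sub_cancel_right, mul_add]
  rw [integral_add ((integrable_mul_exp_neg_mul_sq hb).congr (ae_of_all _ fun x => mul_comm _ _))
    ((integrable_exp_neg_mul_sq hb).mul_const m), hodd, integral_mul_const, zero_add, mul_comm]

lemma integrable_const_mul_exp_neg_sq_div_mul {s : ℝ} (hs : 0 < s) (c τ0 : ℝ) :
    Integrable fun τ => c * exp (-(τ - τ0) ^ 2 / (2 * s)) * τ := by
  refine ((integrable_exp_neg_mul_sq_sub_mul (b := (2 * s)⁻¹) (by positivity) τ0).const_mul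
    c).congr (ae_of_all _ fun τ => ?_)
  simp only [mul_assoc, neg_mul, mul_neg, div_eq_inv_mul]

lemma exists_exp_mul_gaussianPDFReal_eq_mul_exp {s : ℝ} (hs : 0 < s) (τ0 a u : ℝ) :
    ∃ C > 0, ∃ b > 0, ∀ τ, exp (-(τ - τ0) ^ 2 / (2 * s)) * gaussianPDFReal 0 1 (a * τ + u)
      = C * exp (-b * (τ - (τ0 / s - a * u) / (1 / s + a ^ 2)) ^ 2) := by
  have hA : 0 < 1 / s + a ^ 2 := by positivity
  refine ⟨(√(2 * π))⁻¹ * exp (-(τ0 ^ 2 / s + u ^ 2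
    - (τ0 / s - a * u) ^ 2 / (1 / s + a ^ 2)) / 2), by positivity, (1 / s + a ^ 2) / 2,
    by positivity, fun τ => ?_⟩
  rw [gaussianPDFReal_zero_one, mul_left_comm, ← exp_add, mul_assoc, ← exp_add]
  congr 2
  field_simp
  ring

lemma exists_integral_mul_gaussianPDFReal_eq_mul_sub {s c a : ℝ} (hs : 0 < s) (hc : 0 < c)
    (ha : 0 < a) (τ0 u : ℝ) :
    ∃ k > 0, ∫ τ, c * exp (-(τ - τ0) ^ 2 / (2 * s)) * τ * gaussianPDFReal 0 1 (a * τ + u)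
      = k * (τ0 / (a * s) - u) := by
  obtain ⟨C, hC, b, hb, hsq⟩ := exists_exp_mul_gaussianPDFReal_eq_mul_exp hs τ0 a u
  set m := (τ0 / s - a * u) / (1 / s + a ^ 2)
  have hZ : 0 < ∫ τ, exp (-b * (τ - m) ^ 2) :=
    integral_exp_pos ((integrable_exp_neg_mul_sq hb).comp_sub_right m)
  have hintegrand : ∀ τ, c * exp (-(τ - τ0) ^ 2 / (2 * s)) * τ * gaussianPDFReal 0 1 (a * τ + u)
      = c * C * (exp (-b * (τ - m) ^ 2) * τ) := fun τ => by
    rw [mul_right_comm _ τ, mul_assoc c, hsq]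
    ring
  refine ⟨c * C * (∫ τ, exp (-b * (τ - m) ^ 2)) * a / (1 / s + a ^ 2), by positivity, ?_⟩
  simp only [hintegrand, integral_const_mul, integral_exp_neg_mul_sq_sub_mul hb, m]
  field_simp

theorem stmt_1 (σ σ0 τ0 z : ℝ) (hσ : 0 < σ) (hσ0 : 0 < σ0) (hτ0 : 0 < τ0)
    (hz : 0 ≤ z) (N : ℕ) (hN : 0 < N)
    (R : ℝ → ℝ)
    (hR : R = fun β => ∫ τ : ℝ,
      (1 / (Real.sqrt (2 * Real.pi) * σ0)) * Real.exp (-(τ - τ0) ^ 2 / (2 * σ0 ^ 2)) *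
        Phi ((N * τ + τ0 * β) / (2 * Real.sqrt N * σ) - z) * τ)
    (βstar : ℝ) (hβstar : βstar = 4 * σ ^ 2 / σ0 ^ 2 + 2 * Real.sqrt N * z * σ / τ0) :
    (∀ β : ℝ, 0 ≤ β → R β ≤ R βstar) ∧ R 0 ≤ R βstar ∧
      ((0 < z ∨ τ0 ≠ 0) → R 0 < R βstar) := by
  have hsN : 0 < √(N : ℝ) := sqrt_pos.2 (Nat.cast_pos.2 hN)
  set c := 1 / (√(2 * π) * σ0)
  set a := (N : ℝ) / (2 * √N * σ)
  set γ : ℝ → ℝ := fun β => τ0 * β / (2 * √N * σ) - z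
  set w : ℝ → ℝ := fun τ => c * exp (-(τ - τ0) ^ 2 / (2 * σ0 ^ 2)) * τ
  have hR' : ∀ β, R β = ∫ τ, w τ * Phi (a * τ + γ β) := fun β => by
    rw [hR]
    dsimp only
    congr 1 with τ
    rw [show ((N : ℝ) * τ + τ0 * β) / (2 * √N * σ) - z = a * τ + γ β by ring]
    ring
  have ha : 0 < a := by positivity
  have hγstar : γ βstar = τ0 / (a * σ0 ^ 2) := by
    simp only [a, γ, hβstar]
    field_simp
    rw [sq_sqrt (Nat.cast_nonneg N)]
    ring
  have hw : Integrable w := integrable_const_mul_exp_neg_sq_div_mul (pow_pos hσ0 2) c τ0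
  have hsign : ∀ u, ∃ k > 0, ∫ τ, w τ * gaussianPDFReal 0 1 (a * τ + u) = k * (γ βstar - u) :=
    hγstar ▸ exists_integral_mul_gaussianPDFReal_eq_mul_sub (pow_pos hσ0 2) (by positivity) ha τ0
  have hF : ∀ x y, x ≤ y → _ := fun _ _ => integral_mul_Phi_add_sub hw a
  have hmax : ∀ β, R β ≤ R βstar := fun β => by
    simpa only [hR'] using le_of_sub_eq_intervalIntegral_of_sign hF hsign (γ β)
  have hγ : γ 0 < γ βstar := by
    have : 0 < γ βstar := hγstar ▸ by positivity
    simp only [γ, mul_zero, zero_div] at this ⊢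
    linarith
  refine ⟨fun β _ => hmax β, hmax 0, fun _ => ?_⟩
  simpa only [hR'] using lt_of_sub_eq_intervalIntegral_of_sign hF hsign
    (intervalIntegrable_integral_mul_gaussianPDFReal hw a _ _) hγ
end

section
/- Let σ, σ0, τ0 > 0, z ≥ 0, N a positive integer, and define R(β) as in the shrinkage reward functional: R(β) = E_{τ ~ N(τ0, σ0²)}[τ · Φ((Nτ + τ0 β)/(2√N σ) − z)]. Let β* = 4σ²/σ0² + 2√N z σ/τ0. Then R′(β) > 0 for 0 ≤ β < β* and R′(β) < 0 for β > β*. -/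
/-!
Differentiating under the integral sign, `R'(β)` is a positive multiple of
`∫ τ · exp (-(τ - τ0)² / (2σ0²)) · φ(aτ + kβ - z) dτ` with `a, k > 0`. As a function of `τ`,
`φ(aτ + kβ - z)` is a Gaussian kernel centred at `n = (z - kβ) / a`, and a product of two Gaussian
kernels is again one, centred at the precision-weighted mean of `τ0` and `n`. So the integral is a
positive multiple of that mean, which is in turn a positive multiple of `β* - β`.
-/

open Real MeasureTheory ProbabilityTheory

noncomputable def phi (x : ℝ) : ℝ :=
  (Real.sqrt (2 * Real.pi))⁻¹ * Real.exp (-x ^ 2 / 2)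

lemma phi_eq_gaussianPDFReal : phi = gaussianPDFReal 0 1 := by
  funext x
  simp [phi, gaussianPDFReal]

lemma integrable_phi : Integrable phi :=
  phi_eq_gaussianPDFReal ▸ integrable_gaussianPDFReal 0 1

lemma continuous_phi : Continuous phi := by
  unfold phi; fun_prop

lemma phi_nonneg (x : ℝ) : 0 ≤ phi x := by
  unfold phi; positivity

lemma phi_le_phi_zero (x : ℝ) : phi x ≤ phi 0 := by
  unfold phi
  refine mul_le_mul_of_nonneg_left (exp_le_exp.2 ?_) (by positivity)
  nlinarith [sq_nonneg x]

lemma Phi_eq_add_intervalIntegral (x : ℝ) : Phi x = Phi 0 + ∫ t in (0 : ℝ)..x, phi t := by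
  rw [← intervalIntegral.integral_Iic_sub_Iic integrable_phi.integrableOn
    integrable_phi.integrableOn]
  unfold Phi phi
  ring

lemma hasDerivAt_Phi (x : ℝ) : HasDerivAt Phi (phi x) x :=
  ((continuous_phi.integral_hasStrictDerivAt 0 x).hasDerivAt.const_add (Phi 0)
    ).congr_of_eventuallyEq (.of_forall Phi_eq_add_intervalIntegral)

lemma continuous_Phi : Continuous Phi :=
  continuous_iff_continuousAt.2 fun x => (hasDerivAt_Phi x).continuousAt

lemma abs_Phi_le_one (x : ℝ) : |Phi x| ≤ 1 := by
  change |∫ t in Set.Iic x, phi t| ≤ 1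
  rw [abs_of_nonneg (setIntegral_nonneg measurableSet_Iic fun t _ => phi_nonneg t)]
  calc Phi x ≤ ∫ t, phi t := setIntegral_le_integral integrable_phi (.of_forall phi_nonneg)
    _ = 1 := by
      rw [phi_eq_gaussianPDFReal]
      exact integral_gaussianPDFReal_eq_one 0 one_ne_zero

theorem hasDerivAt_integral_mul_Phi {g u : ℝ → ℝ} (hg : Integrable g) (hu : Measurable u)
    (k β : ℝ) :
    HasDerivAt (fun β => ∫ τ, g τ * Phi (u τ + k * β))
      (∫ τ, g τ * (phi (u τ + k * β) * k)) β := by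
  have hmeas : ∀ {f : ℝ → ℝ}, Continuous f → ∀ β,
      AEStronglyMeasurable (fun τ => f (u τ + k * β)) :=
    fun hf β => (hf.measurable.comp (hu.add_const _)).aestronglyMeasurable
  refine (hasDerivAt_integral_of_dominated_loc_of_deriv_le
    (F' := fun β τ => g τ * (phi (u τ + k * β) * k)) (bound := fun τ => ‖g τ‖ * (phi 0 * |k|))
    Filter.univ_mem (.of_forall fun β => hg.1.mul (hmeas continuous_Phi β))
    (hg.mul_bdd (hmeas continuous_Phi β) (.of_forall fun τ => abs_Phi_le_one _))
    (hg.1.mul ((hmeas continuous_phi β).mul_const k)) ?_ (hg.norm.mul_const _) ?_).2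
  · refine .of_forall fun τ x _ => ?_
    rw [norm_mul, norm_mul, Real.norm_eq_abs, Real.norm_eq_abs, Real.norm_eq_abs,
      abs_of_nonneg (phi_nonneg _)]
    gcongr
    exact phi_le_phi_zero _
  · refine .of_forall fun τ x _ => ?_
    have hPhi := (hasDerivAt_Phi _).comp x (((hasDerivAt_id x).const_mul k).const_add (u τ))
    exact (hPhi.const_mul (g τ)).congr_deriv (by simp)

theorem integrable_mul_exp_neg_mul_sq_sub {b : ℝ} (hb : 0 < b) (m : ℝ) :
    Integrable fun x : ℝ => x * exp (-b * (x - m) ^ 2) := by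
  refine (((integrable_mul_exp_neg_mul_sq hb).comp_sub_right m).add
    (((integrable_exp_neg_mul_sq hb).comp_sub_right m).const_mul m)).congr (.of_forall fun x => ?_)
  simp only [Pi.add_apply]
  ring

theorem integral_mul_exp_neg_mul_sq_sub {b : ℝ} (hb : 0 < b) (m : ℝ) :
    ∫ x, x * exp (-b * (x - m) ^ 2) = √(π / b) * m := by
  obtain ⟨v, hvb⟩ : ∃ v : NNReal, (v : ℝ) = (2 * b)⁻¹ := ⟨⟨_, by positivity⟩, rfl⟩
  have hv : v ≠ 0 := by
    rw [ne_eq, ← NNReal.coe_eq_zero, hvb]; positivity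
  have hpdf : ∀ x, x * exp (-b * (x - m) ^ 2) =
      √(π / b) * (gaussianPDFReal m v x • x) := by
    intro x
    have h2 : 2 * π * (v : ℝ) = π / b := by rw [hvb]; field_simp
    have h3 : -(x - m) ^ 2 / (2 * (v : ℝ)) = -b * (x - m) ^ 2 := by rw [hvb]; field_simp
    rw [gaussianPDFReal, h2, h3, smul_eq_mul,
      ← mul_assoc, ← mul_assoc, mul_inv_cancel₀ (by positivity), one_mul, mul_comm]
  simp_rw [hpdf]
  rw [integral_const_mul, ← integral_gaussianReal_eq_integral_smul hv,
    integral_id_gaussianReal]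

theorem exp_neg_mul_sq_sub_mul_exp_neg_mul_sq_sub {b c : ℝ} (hbc : b + c ≠ 0) (m n x : ℝ) :
    exp (-b * (x - m) ^ 2) * exp (-c * (x - n) ^ 2) =
      exp (-(b * c / (b + c)) * (m - n) ^ 2) *
        exp (-(b + c) * (x - (b * m + c * n) / (b + c)) ^ 2) := by
  rw [← exp_add, ← exp_add]
  congr 1
  field_simp
  ring

theorem integral_mul_exp_neg_mul_sq_sub_mul_exp_neg_mul_sq_sub {b c : ℝ} (hbc : 0 < b + c)
    (m n : ℝ) :
    ∫ x, x * (exp (-b * (x - m) ^ 2) * exp (-c * (x - n) ^ 2)) =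
      exp (-(b * c / (b + c)) * (m - n) ^ 2) * √(π / (b + c)) / (b + c) * (b * m + c * n) := by
  simp_rw [exp_neg_mul_sq_sub_mul_exp_neg_mul_sq_sub hbc.ne', mul_left_comm _ (exp _)]
  rw [integral_const_mul, integral_mul_exp_neg_mul_sq_sub hbc]
  ring

lemma phi_mul_sub (a x n : ℝ) :
    phi (a * (x - n)) = (√(2 * π))⁻¹ * exp (-(a ^ 2 / 2) * (x - n) ^ 2) := by
  unfold phi
  ring_nf

theorem exists_pos_hasDerivAt_integral_gaussian_mul_Phi {b a : ℝ} (hb : 0 < b) (ha : a ≠ 0)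
    (m c k β : ℝ) :
    ∃ K, 0 < K ∧ HasDerivAt (fun β => ∫ τ, τ * exp (-b * (τ - m) ^ 2) * Phi (a * τ + c + k * β))
      (K * k * (2 * b * m - a * (c + k * β))) β := by
  obtain ⟨n, hn⟩ : ∃ n, a * n = -(c + k * β) := ⟨-(c + k * β) / a, mul_div_cancel₀ _ ha⟩
  have hphi : ∀ τ, phi (a * τ + c + k * β) = (√(2 * π))⁻¹ * exp (-(a ^ 2 / 2) * (τ - n) ^ 2) := by
    intro τ
    rw [← phi_mul_sub]
    congr 1
    linear_combination hn
  have hmean : b * m + a ^ 2 / 2 * n = (2 * b * m - a * (c + k * β)) / 2 := by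
    linear_combination a / 2 * hn
  obtain ⟨K, hK, hK_eq⟩ : ∃ K, 0 < K ∧
      ∫ τ, τ * (exp (-b * (τ - m) ^ 2) * exp (-(a ^ 2 / 2) * (τ - n) ^ 2)) =
        K * (b * m + a ^ 2 / 2 * n) :=
    ⟨_, by positivity, integral_mul_exp_neg_mul_sq_sub_mul_exp_neg_mul_sq_sub (by positivity) _ _⟩
  refine ⟨(√(2 * π))⁻¹ * K / 2, by positivity, ?_⟩
  convert hasDerivAt_integral_mul_Phi (integrable_mul_exp_neg_mul_sq_sub hb m)
    (by fun_prop : Measurable fun τ : ℝ => a * τ + c) k β using 1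
  simp_rw [hphi]
  calc _ = k * (√(2 * π))⁻¹ *
        ∫ τ, τ * (exp (-b * (τ - m) ^ 2) * exp (-(a ^ 2 / 2) * (τ - n) ^ 2)) := by
        rw [hK_eq, hmean]; ring
    _ = _ := by
        rw [← integral_const_mul]
        congr 1 with τ
        ring

theorem stmt_2_general (σ σ0 τ0 z : ℝ) (hσ : 0 < σ) (hσ0 : 0 < σ0) (hτ0 : 0 < τ0)
    (N : ℕ) (hN : 0 < N)
    (R : ℝ → ℝ)
    (hR : R = fun β => ∫ τ : ℝ,
      (1 / (Real.sqrt (2 * Real.pi) * σ0)) * Real.exp (-(τ - τ0) ^ 2 / (2 * σ0 ^ 2)) *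
        (τ * Phi ((N * τ + τ0 * β) / (2 * Real.sqrt N * σ) - z)))
    (βstar : ℝ) (hβstar : βstar = 4 * σ ^ 2 / σ0 ^ 2 + 2 * Real.sqrt N * z * σ / τ0) :
    (∀ β : ℝ, 0 ≤ β → β < βstar → 0 < deriv R β) ∧
      (∀ β : ℝ, βstar < β → deriv R β < 0) := by
  obtain ⟨s, hs, hsN⟩ : ∃ s, 0 < s ∧ √(N : ℝ) = s :=
    ⟨_, Real.sqrt_pos.2 (by exact_mod_cast hN), rfl⟩
  rw [hsN, ← Real.sq_sqrt (Nat.cast_nonneg N), hsN] at hR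
  rw [hsN] at hβstar
  set C := 1 / (√(2 * π) * σ0)
  set b := 1 / (2 * σ0 ^ 2)
  set a := s / (2 * σ)
  set k := τ0 / (2 * s * σ)
  have hR' : R = fun β => C * ∫ τ, τ * exp (-b * (τ - τ0) ^ 2) * Phi (a * τ + -z + k * β) := by
    rw [hR]
    funext β
    rw [← integral_const_mul]
    congr 1 with τ
    rw [show -(τ - τ0) ^ 2 / (2 * σ0 ^ 2) = -b * (τ - τ0) ^ 2 by ring,
      show (s ^ 2 * τ + τ0 * β) / (2 * s * σ) - z = a * τ + -z + k * β by
        simp only [a, k]; field_simp; ring]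
    ring
  have hderiv : ∀ β, ∃ K, 0 < K ∧ deriv R β = K * (βstar - β) := by
    intro β
    obtain ⟨K, hK, hRK⟩ :=
      exists_pos_hasDerivAt_integral_gaussian_mul_Phi (by positivity : 0 < b)
        (by positivity : a ≠ 0) τ0 (-z) k β
    refine ⟨C * K * k * (τ0 / (4 * σ ^ 2)), by positivity, ?_⟩
    rw [hR', (hRK.const_mul C).deriv, hβstar]
    simp only [b, a, k]
    field_simp
    ring
  refine ⟨fun β _ hβ => ?_, fun β hβ => ?_⟩ <;> obtain ⟨K, hK, hK_eq⟩ := hderiv β <;> rw [hK_eq]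
  · exact mul_pos hK (sub_pos.2 hβ)
  · exact mul_neg_of_pos_of_neg hK (sub_neg.2 hβ)

theorem stmt_2 (σ σ0 τ0 z : ℝ) (hσ : 0 < σ) (hσ0 : 0 < σ0) (hτ0 : 0 < τ0)
    (hz : 0 ≤ z) (N : ℕ) (hN : 0 < N)
    (R : ℝ → ℝ)
    (hR : R = fun β => ∫ τ : ℝ,
      (1 / (Real.sqrt (2 * Real.pi) * σ0)) * Real.exp (-(τ - τ0) ^ 2 / (2 * σ0 ^ 2)) *
        (τ * Phi ((N * τ + τ0 * β) / (2 * Real.sqrt N * σ) - z)))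
    (βstar : ℝ) (hβstar : βstar = 4 * σ ^ 2 / σ0 ^ 2 + 2 * Real.sqrt N * z * σ / τ0) :
    (∀ β : ℝ, 0 ≤ β → β < βstar → 0 < deriv R β) ∧
      (∀ β : ℝ, βstar < β → deriv R β < 0) :=
  stmt_2_general σ σ0 τ0 z hσ hσ0 hτ0 N hN R hR βstar hβstar
end
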